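/- If H is a 4×4 complex Hadamard matrix in dephased form all of whose entries are real, then the characteristic polynomial of H is one of: (X − 1)³·(X + 1), (X − 1)²·(X + 1)², or (X − 1)·(X + 1)·(X² + X + 1) (the latter corresponding to eigenvalues {1, −1, e^{2πi/3}, e^{4πi/3}}). -/

import Mathlib

/-!
Real entries of modulus `1/2` are `±1/2`. Orthogonality to the constant row `0` forces every
other row to have exactly one entry `+1/2` among its last three, so it is one of three vectors,
and orthonormality makes rows `1, 2, 3` distinct. Hence `H` is one of six matrices, indexed by
the permutations of these three rows: the identity gives `(X - 1)³ (X + 1)`, the transpositions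
(symmetric, trace `0`) give `(X - 1)² (X + 1)²`, and the two 3-cycles give
`(X - 1) (X + 1) (X² + X + 1)`.
-/

open Matrix Polynomial Complex

/-- A 4×4 complex Hadamard matrix: unitary with all entries of absolute value `1/√4`. -/
def IsHadamard (H : Matrix (Fin 4) (Fin 4) ℂ) : Prop :=
  H * Hᴴ = 1 ∧ Hᴴ * H = 1 ∧ ∀ i j, ‖H i j‖ = 1 / Real.sqrt 4

/-- Dephased form: all entries of the 0th row and 0th column equal `1/√4`. -/
def IsDephased (H : Matrix (Fin 4) (Fin 4) ℂ) : Prop :=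
  (∀ j, H 0 j = ((1 / Real.sqrt 4 : ℝ) : ℂ)) ∧ (∀ i, H i 0 = ((1 / Real.sqrt 4 : ℝ) : ℂ))

theorem Complex.eq_or_eq_neg_of_im_eq_zero {z : ℂ} {r : ℝ} (hz : z.im = 0) (h : ‖z‖ = r) :
    z = r ∨ z = -r := by
  have hzr : z = (z.re : ℂ) := Complex.ext rfl (by simp [hz])
  rw [hzr, norm_real, Real.norm_eq_abs] at h
  rcases abs_eq (h ▸ abs_nonneg z.re) |>.mp h with h' | h'
  · exact .inl (by rw [hzr, h'])
  · exact .inr (by rw [hzr, h', ofReal_neg])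

namespace Matrix

variable {n : Type*} [Fintype n] [DecidableEq n]

theorem dotProduct_eq_one_apply_of_mul_conjTranspose_eq_one {H : Matrix n n ℂ}
    (hU : H * Hᴴ = 1) (hreal : ∀ i j, (H i j).im = 0) (i k : n) :
    H i ⬝ᵥ H k = (1 : Matrix n n ℂ) i k := by
  have hT : Hᴴ = Hᵀ := by
    ext i j
    exact conj_eq_iff_im.mpr (hreal j i)
  rw [← hU, hT, mul_apply']
  rfl

theorem injective_of_dotProduct_eq_one_apply {R : Type*} [CommRing R] [Nontrivial R]
    {H : Matrix n n R} (h : ∀ i k, H i ⬝ᵥ H k = (1 : Matrix n n R) i k) :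
    Function.Injective H := by
  intro i k hik
  by_contra hne
  have hik' := h i k
  rw [hik, h k k, one_apply_eq, one_apply_ne hne] at hik'
  exact one_ne_zero hik'

end Matrix

noncomputable section

def constRow : Fin 4 → ℂ := fun _ => 1/2
def rowA : Fin 4 → ℂ := ![1/2, 1/2, -1/2, -1/2]
def rowB : Fin 4 → ℂ := ![1/2, -1/2, 1/2, -1/2]
def rowC : Fin 4 → ℂ := ![1/2, -1/2, -1/2, 1/2]

end

theorem eq_rowA_or_eq_rowB_or_eq_rowC {v : Fin 4 → ℂ} (hv : ∀ j, v j = 1/2 ∨ v j = -(1/2))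
    (h0 : v 0 = 1/2) (horth : constRow ⬝ᵥ v = 0) : v = rowA ∨ v = rowB ∨ v = rowC := by
  have hv_eq : v = ![v 0, v 1, v 2, v 3] := by
    ext j; fin_cases j <;> rfl
  rw [dotProduct, Fin.sum_univ_four] at horth
  rw [hv_eq]
  rcases hv 1 with h1 | h1 <;> rcases hv 2 with h2 | h2 <;> rcases hv 3 with h3 | h3 <;>
    norm_num [constRow, h0, h1, h2, h3] at horth <;> norm_num [rowA, rowB, rowC, h0, h1, h2, h3]

theorem rows_of_real_dephased_hadamard {H : Matrix (Fin 4) (Fin 4) ℂ} (hH : _root_.IsHadamard H)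
    (hd : IsDephased H) (hreal : ∀ i j, (H i j).im = 0) :
    H 0 = constRow ∧ ∀ i ≠ 0, H i = rowA ∨ H i = rowB ∨ H i = rowC := by
  have hsqrt : (1 / Real.sqrt 4 : ℝ) = 1 / 2 := by
    rw [show (4 : ℝ) = 2 ^ 2 by norm_num, Real.sqrt_sq zero_le_two]
  have h0 : H 0 = constRow := by
    ext j
    rw [hd.1, hsqrt]
    simp [constRow]
  refine ⟨h0, fun i hi => eq_rowA_or_eq_rowB_or_eq_rowC (fun j => ?_) ?_ ?_⟩
  · have hij := Complex.eq_or_eq_neg_of_im_eq_zero (hreal i j) ((hH.2.2 i j).trans hsqrt)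
    push_cast at hij
    exact hij
  · rw [hd.2, hsqrt]
    simp
  · rw [← h0, dotProduct_eq_one_apply_of_mul_conjTranspose_eq_one hH.1 hreal,
      one_apply_ne hi.symm]

theorem charpoly_of_rows_id :
    (of ![constRow, rowA, rowB, rowC]).charpoly = (X - 1) ^ 3 * (X + 1) := by
  refine Polynomial.funext fun t => ?_
  rw [eval_charpoly]
  simp [det_succ_row_zero, Fin.sum_univ_succ, constRow, rowA, rowB, rowC, Fin.succAbove, submatrix]
  ring

theorem charpoly_of_rows_swap :
    (of ![constRow, rowB, rowA, rowC]).charpoly = (X - 1) ^ 2 * (X + 1) ^ 2 ∧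
    (of ![constRow, rowC, rowB, rowA]).charpoly = (X - 1) ^ 2 * (X + 1) ^ 2 ∧
    (of ![constRow, rowA, rowC, rowB]).charpoly = (X - 1) ^ 2 * (X + 1) ^ 2 := by
  refine ⟨?_, ?_, ?_⟩ <;> refine Polynomial.funext fun t => ?_ <;> rw [eval_charpoly] <;>
    simp [det_succ_row_zero, Fin.sum_univ_succ, constRow, rowA, rowB, rowC, Fin.succAbove,
      submatrix] <;>
    ring

theorem charpoly_of_rows_cycle :
    (of ![constRow, rowB, rowC, rowA]).charpoly = (X - 1) * (X + 1) * (X ^ 2 + X + 1) ∧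
    (of ![constRow, rowC, rowA, rowB]).charpoly = (X - 1) * (X + 1) * (X ^ 2 + X + 1) := by
  refine ⟨?_, ?_⟩ <;> refine Polynomial.funext fun t => ?_ <;> rw [eval_charpoly] <;>
    simp [det_succ_row_zero, Fin.sum_univ_succ, constRow, rowA, rowB, rowC, Fin.succAbove,
      submatrix] <;>
    ring

theorem real_hadamard_charpoly
    (H : Matrix (Fin 4) (Fin 4) ℂ)
    (hH : _root_.IsHadamard H) (hd : IsDephased H)
    (hreal : ∀ i j, (H i j).im = 0) :
    H.charpoly = (X - 1) ^ 3 * (X + 1) ∨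
    H.charpoly = (X - 1) ^ 2 * (X + 1) ^ 2 ∨
    H.charpoly = (X - 1) * (X + 1) * (X ^ 2 + X + 1) := by
  obtain ⟨h0, hrows⟩ := rows_of_real_dephased_hadamard hH hd hreal
  have hinj : Function.Injective H := injective_of_dotProduct_eq_one_apply
    (dotProduct_eq_one_apply_of_mul_conjTranspose_eq_one hH.1 hreal)
  have h12 := hinj.ne (show (1 : Fin 4) ≠ 2 by decide)
  have h13 := hinj.ne (show (1 : Fin 4) ≠ 3 by decide)
  have h23 := hinj.ne (show (2 : Fin 4) ≠ 3 by decide)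
  have hH_eq : H = of ![constRow, H 1, H 2, H 3] := by
    ext i j
    fin_cases i <;> simp [h0]
  rw [hH_eq]
  rcases hrows 1 (by decide) with h1 | h1 | h1 <;> rcases hrows 2 (by decide) with h2 | h2 | h2 <;>
    rcases hrows 3 (by decide) with h3 | h3 | h3 <;>
    simp only [h1, h2, h3, ne_eq, not_true_eq_false] at h12 h13 h23 ⊢ <;>
    simp only [charpoly_of_rows_id, charpoly_of_rows_swap, charpoly_of_rows_cycle, true_or,
      or_true]
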